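/- arXiv:2103.15799 — 2 statements merged into one kernel-verified Lean document; each statement's English description precedes it below -/
import Mathlib

section
/- Let T be a complete first-order theory, φ(x̄;ȳ) a formula, and (āᵢ, b̄ᵢ : i ∈ ℚ) an indiscernible sequence in a model M of T such that M ⊨ φ(āᵢ; b̄ⱼ) iff i < j. Write b̄₀ = b₀⁰⌢b̄'₀ where b₀⁰ is a single element, and set ℚ* = ℚ \ {0}. If the sequence (āᵢ : i ∈ ℚ*) is NOT indiscernible over b₀⁰, then there is a formula ψ(x̄; y), where y is a single variable and ψ has parameters from {āᵢ : i ∈ ℚ*}, which has the order property. -/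
open FirstOrder FirstOrder.Language

universe u v

/-- An elementary extension of `M`: a structure together with an elementary embedding of `M`
into it. -/
structure ElemExt (L : FirstOrder.Language.{u, v}) (M : Type (max u v)) [L.Structure M] where
  carrier : Type (max u v)
  [str : L.Structure carrier]
  emb : M ↪ₑ[L] carrier

attribute [instance] ElemExt.str

/-- A formula `φ(x̄; ȳ)` (without parameters) has the order property with respect to a theory
`T` if in some model of `T` there are sequences `(āᵢ : i < ω)` and `(b̄ⱼ : j < ω)` such that
`φ(āᵢ; b̄ⱼ)` holds iff `i < j`. -/
def FormulaHasOP {L : FirstOrder.Language.{u, v}} (T : L.Theory) {α β : Type*}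
    (φ : L.Formula (α ⊕ β)) : Prop :=
  ∃ (N : FirstOrder.Language.Theory.ModelType.{u, v, max u v} T)
    (a : ℕ → α → N) (b : ℕ → β → N),
    ∀ i j : ℕ, φ.Realize (Sum.elim (a i) (b j)) ↔ i < j

/-- A formula `φ(x̄; ȳ)` (without parameters) has the independence property with respect to a
theory `T` if in some model of `T` there are tuples `(āᵢ : i < ω)` and `(b̄_S : S ⊆ ω)` such
that `φ(āᵢ; b̄_S)` holds iff `i ∈ S`. -/
def FormulaHasIP {L : FirstOrder.Language.{u, v}} (T : L.Theory) {α β : Type*}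
    (φ : L.Formula (α ⊕ β)) : Prop :=
  ∃ (N : FirstOrder.Language.Theory.ModelType.{u, v, max u v} T)
    (a : ℕ → α → N) (b : Set ℕ → β → N),
    ∀ (i : ℕ) (S : Set ℕ), φ.Realize (Sum.elim (a i) (b S)) ↔ i ∈ S

/-- A formula `φ(x̄; ȳ)` with parameters `c` from `M` has the order property if in some
elementary extension of `M` there are sequences `(āᵢ : i < ω)` and `(b̄ⱼ : j < ω)` such that
`φ(āᵢ; b̄ⱼ; c)` holds iff `i < j`. -/
def HasOPWithParams {L : FirstOrder.Language.{u, v}} {M : Type (max u v)} [L.Structure M]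
    {α β γ : Type*} (φ : L.Formula ((α ⊕ β) ⊕ γ)) (c : γ → M) : Prop :=
  ∃ (N : ElemExt L M) (a : ℕ → α → N.carrier) (b : ℕ → β → N.carrier),
    ∀ i j : ℕ, φ.Realize (Sum.elim (Sum.elim (a i) (b j)) (N.emb ∘ c)) ↔ i < j

/-- A formula `φ(x̄; ȳ)` with parameters `c` from `M` has the independence property if in some
elementary extension of `M` there are tuples `(āᵢ : i < ω)` and `(b̄_S : S ⊆ ω)` such that
`φ(āᵢ; b̄_S; c)` holds iff `i ∈ S`. -/
def HasIPWithParams {L : FirstOrder.Language.{u, v}} {M : Type (max u v)} [L.Structure M]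
    {α β γ : Type*} (φ : L.Formula ((α ⊕ β) ⊕ γ)) (c : γ → M) : Prop :=
  ∃ (N : ElemExt L M) (a : ℕ → α → N.carrier) (b : Set ℕ → β → N.carrier),
    ∀ (i : ℕ) (S : Set ℕ), φ.Realize (Sum.elim (Sum.elim (a i) (b S)) (N.emb ∘ c)) ↔ i ∈ S

/-- The family of tuples `(c̄ᵢ : i ∈ ι)` is an indiscernible sequence over the set `A`:
any two strictly increasing tuples of indices realize the same formulas with parameters
from `A`. -/
def IsIndiscernibleOver {L : FirstOrder.Language.{u, v}} {M : Type (max u v)} [L.Structure M]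
    {ι : Type*} [LinearOrder ι] {γ : Type*} (c : ι → γ → M) (A : Set M) : Prop :=
  ∀ (n m : ℕ) (i j : Fin n → ι), StrictMono i → StrictMono j →
    ∀ p : Fin m → M, (∀ l, p l ∈ A) →
      ∀ φ : L.Formula (Fin n × γ ⊕ Fin m),
        φ.Realize (Sum.elim (fun v : Fin n × γ => c (i v.1) v.2) p) ↔
          φ.Realize (Sum.elim (fun v : Fin n × γ => c (j v.1) v.2) p)

/-- The family of tuples `(c̄ᵢ : i ∈ ι)` is an indiscernible sequence. -/
def IsIndiscernible {L : FirstOrder.Language.{u, v}} {M : Type (max u v)} [L.Structure M]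
    {ι : Type*} [LinearOrder ι] {γ : Type*} (c : ι → γ → M) : Prop :=
  IsIndiscernibleOver (L := L) c ∅

/-- Two families of tuples are mutually indiscernible if each is indiscernible over the union
of the tuples of the other. -/
def MutuallyIndiscernible {L : FirstOrder.Language.{u, v}} {M : Type (max u v)} [L.Structure M]
    {ι : Type*} [LinearOrder ι] {γ δ : Type*} (a : ι → γ → M) (b : ι → δ → M) : Prop :=
  IsIndiscernibleOver (L := L) a (⋃ i, Set.range (b i)) ∧
    IsIndiscernibleOver (L := L) b (⋃ i, Set.range (a i))

/-- The family of tuples `(c̄ᵢ : i ∈ ι)` is totally indiscernible: any two tuples of distinct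
indices (in any order) realize the same formulas. -/
def IsTotallyIndiscernible {L : FirstOrder.Language.{u, v}} {M : Type (max u v)} [L.Structure M]
    {ι : Type*} [LinearOrder ι] {γ : Type*} (c : ι → γ → M) : Prop :=
  ∀ (n : ℕ) (i j : Fin n → ι), Function.Injective i → Function.Injective j →
    ∀ φ : L.Formula (Fin n × γ),
      φ.Realize (fun v : Fin n × γ => c (i v.1) v.2) ↔
        φ.Realize (fun v : Fin n × γ => c (j v.1) v.2)

/-- A set in a linear order is dense (in the order) and unbounded above and below. -/
def DenseUnbounded {α : Type*} [LinearOrder α] (S : Set α) : Prop :=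
  (∀ x y : α, x < y → ∃ z ∈ S, x < z ∧ z < y) ∧ (∀ x : α, ∃ z ∈ S, z < x) ∧
    (∀ x : α, ∃ z ∈ S, x < z)

/-- `R : α → β → Prop` presents (a structure isomorphic to) the random ordered bipartite
graph `G*`, i.e. the Fraïssé limit of finite ordered bipartite graphs: both parts are
countable nonempty dense linear orders without endpoints and the edge relation is generic. -/
def IsRandomOBG {α β : Type*} [LinearOrder α] [LinearOrder β] (R : α → β → Prop) : Prop :=
  Countable α ∧ Countable β ∧ Nonempty α ∧ Nonempty β ∧
    (∀ F G : Finset β, Disjoint F G →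
      DenseUnbounded {x : α | (∀ f ∈ F, R x f) ∧ ∀ g ∈ G, ¬R x g}) ∧
    (∀ F G : Finset α, Disjoint F G →
      DenseUnbounded {y : β | (∀ f ∈ F, R f y) ∧ ∀ g ∈ G, ¬R g y})

/-- An element of the random ordered bipartite graph `G*`, whose two parts `U(G*)` and
`V(G*)` are both identified with `ℚ`: `Sum.inl` is the `U`-part, `Sum.inr` the `V`-part. -/
abbrev GStarIdx : Type := ℚ ⊕ ℚ

/-- The index of the pair `(s, q)`: in the `U`-part if `s = true`, in the `V`-part
otherwise. -/
def mkIdx {n : ℕ} (s : Fin n → Bool) (q : Fin n → ℚ) : Fin n → GStarIdx := fun k =>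
  bif s k then Sum.inl (q k) else Sum.inr (q k)

/-- Two pairs of elements of `G*` (with edge relation `R`) have the same quantifier-free
`L*`-type, where `L* = {U, ≤_U, V, ≤_V, R}`. -/
def SamePairType (R : ℚ → ℚ → Prop) :
    GStarIdx → GStarIdx → GStarIdx → GStarIdx → Prop
  | Sum.inl p, Sum.inl q, Sum.inl p', Sum.inl q' => (p ≤ q ↔ p' ≤ q') ∧ (q ≤ p ↔ q' ≤ p')
  | Sum.inr p, Sum.inr q, Sum.inr p', Sum.inr q' => (p ≤ q ↔ p' ≤ q') ∧ (q ≤ p ↔ q' ≤ p')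
  | Sum.inl p, Sum.inr q, Sum.inl p', Sum.inr q' => R p q ↔ R p' q'
  | Sum.inr q, Sum.inl p, Sum.inr q', Sum.inl p' => R p q ↔ R p' q'
  | _, _, _, _ => False

/-- Two tuples of elements of `G*` (with edge relation `R`) have the same quantifier-free
`L*`-type. -/
def SameQfType (R : ℚ → ℚ → Prop) {n : ℕ} (i j : Fin n → GStarIdx) : Prop :=
  ∀ k l : Fin n, SamePairType R (i k) (i l) (j k) (j l)

/-- The variables carried by a coordinate of a mixed tuple: a `U`-index carries an `x̄`-tuple
of length `da`, a `V`-index a `ȳ`-tuple of length `db`. -/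
def MixVar (da db : ℕ) : Bool → Type
  | true => Fin da
  | false => Fin db

/-- Choose the `a`-tuple or the `b`-tuple according to the side. -/
def pickSide {M : Type*} {da db : ℕ} (a : Fin da → M) (b : Fin db → M) :
    (s : Bool) → MixVar da db s → M
  | true, w => a w
  | false, w => b w

/-- The family `(āᵢ : i ∈ U(G*) ≅ ℚ) ∪ (b̄ⱼ : j ∈ V(G*) ≅ ℚ)`, indexed by the random ordered
bipartite graph `G*` with edge relation `R`, is `L*`-indiscernible: index tuples with the same
quantifier-free `L*`-type in `G*` realize the same `L`-formulas in `M`. -/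
def IsLStarIndiscernible {L : FirstOrder.Language.{u, v}} {M : Type (max u v)} [L.Structure M]
    (R : ℚ → ℚ → Prop) {da db : ℕ} (a : ℚ → Fin da → M) (b : ℚ → Fin db → M) : Prop :=
  ∀ (n : ℕ) (s : Fin n → Bool) (q q' : Fin n → ℚ),
    SameQfType R (mkIdx s q) (mkIdx s q') →
      ∀ φ : L.Formula ((k : Fin n) × MixVar da db (s k)),
        φ.Realize (fun v => pickSide (a (q v.1)) (b (q v.1)) (s v.1) v.2) ↔
          φ.Realize (fun v => pickSide (a (q' v.1)) (b (q' v.1)) (s v.1) v.2)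

/-!
Collapsing the parameters `b₀⁰` into a single variable `y`, non-indiscernibility gives a
formula `χ(x̄₁, …, x̄ₙ; y)` and increasing tuples `ī, j̄` in `ℚ*` on which `χ(·; b₀⁰)` differs.
By indiscernibility of `(āᵢ b̄ᵢ)`, the truth value of `χ(ā_{t₁}, …, ā_{tₙ}; b_u⁰)` for increasing
`t` avoiding `u` depends only on the position of `u` among the `tₖ`. Moving `0` from its cut in
`ī` to its cut in `j̄` one step at a time, some adjacent cuts `d`, `d + 1` disagree. Freeing the
`d`-th block of `χ` and fixing the others as parameters gives `ψ(x̄; y)` whose truth value on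
`(ā_r, b_u⁰)` depends only on whether `r < u`, and interleaved sequences `rᵢ`, `uⱼ` witness the
order property.
-/

open Function Set

section

variable {L : FirstOrder.Language.{u, v}} {M : Type (max u v)} [L.Structure M]

theorem IsIndiscernible.realize_comp_iff {ι γ β : Type*} [LinearOrder ι] {c : ι → γ → M}
    (hc : IsIndiscernible (L := L) c) (θ : L.Formula β) {N : ℕ} (g : β → Fin N × γ)
    {s s' : Fin N → ι} (hs : StrictMono s) (hs' : StrictMono s') :
    θ.Realize (fun w => c (s (g w).1) (g w).2) ↔ θ.Realize (fun w => c (s' (g w).1) (g w).2) := by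
  simpa [Formula.realize_relabel, comp_def] using
    hc N 0 s s' hs hs' Fin.elim0 (fun l => l.elim0) (θ.relabel (Sum.inl ∘ g))

theorem exists_not_realize_iff_of_not_isIndiscernibleOver_singleton {ι γ : Type*}
    [LinearOrder ι] {c : ι → γ → M} {y : M} (h : ¬IsIndiscernibleOver (L := L) c {y}) :
    ∃ (n : ℕ) (i j : Fin n → ι) (χ : L.Formula (Fin n × γ ⊕ Fin 1)),
      StrictMono i ∧ StrictMono j ∧
        ¬(χ.Realize (Sum.elim (fun v => c (i v.1) v.2) fun _ => y) ↔
          χ.Realize (Sum.elim (fun v => c (j v.1) v.2) fun _ => y)) := by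
  simp only [IsIndiscernibleOver, mem_singleton_iff, not_forall] at h
  obtain ⟨n, m, i, j, hi, hj, p, hp, χ, hne⟩ := h
  obtain rfl : p = fun _ => y := funext hp
  refine ⟨n, i, j, χ.relabel (Sum.map id fun _ => 0), hi, hj, ?_⟩
  rwa [Formula.realize_relabel, Formula.realize_relabel, Sum.elim_comp_map, Sum.elim_comp_map]

theorem Fin.exists_strictMono_insertNth {α : Type*} [LinearOrder α] {u : α} :
    ∀ {n : ℕ} {t : Fin n → α}, StrictMono t → u ∉ range t →
      ∃ e : Fin (n + 1), StrictMono (e.insertNth u t)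
  | 0, _, _, _ => ⟨0, Fin.strictMono_iff_lt_succ.2 fun i => i.elim0⟩
  | n + 1, t, ht, hu => by
    rcases lt_or_gt_of_ne fun h => hu ⟨0, h⟩ with h0 | h0
    · obtain ⟨e, he⟩ := Fin.exists_strictMono_insertNth (ht.comp (Fin.strictMono_succ))
        fun ⟨k, hk⟩ => hu ⟨k.succ, hk⟩
      refine ⟨e.succ, ?_⟩
      rw [← Fin.cons_self_tail t, Fin.insertNth_succ_cons, Fin.strictMono_cons]
      refine ⟨fun j => ?_, he⟩
      cases j using Fin.succAboveCases e with
      | x => simpa using h0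
      | p k => simpa [Fin.tail] using ht (Fin.succ_pos k)
    · exact ⟨0, Fin.strictMono_insertNth_zero ht u h0⟩

section Cut

variable {ι γ δ : Type*} [LinearOrder ι] {a : ι → γ → M} {b : ι → δ → M}

def RealizeAt {n : ℕ} (χ : L.Formula (Fin n × γ ⊕ Fin 1)) (a : ι → γ → M) (b : ι → δ → M)
    (y₀ : δ) (t : Fin n → ι) (u : ι) : Prop :=
  χ.Realize (Sum.elim (fun v => a (t v.1) v.2) fun _ => b u y₀)

theorem realizeAt_iff_of_strictMono_insertNth
    (hind : IsIndiscernible (L := L) fun i => Sum.elim (a i) (b i)) {n : ℕ}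
    (χ : L.Formula (Fin n × γ ⊕ Fin 1)) (y₀ : δ) {e : Fin (n + 1)} {t t' : Fin n → ι} {u u' : ι}
    (h : StrictMono (e.insertNth u t)) (h' : StrictMono (e.insertNth u' t')) :
    RealizeAt χ a b y₀ t u ↔ RealizeAt χ a b y₀ t' u' := by
  let g : Fin n × γ ⊕ Fin 1 → Fin (n + 1) × (γ ⊕ δ) :=
    Sum.elim (fun v => (e.succAbove v.1, Sum.inl v.2)) fun _ => (e, Sum.inr y₀)
  have key : ∀ (t : Fin n → ι) (u : ι), RealizeAt χ a b y₀ t u ↔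
      χ.Realize fun w => (fun i => Sum.elim (a i) (b i))
        ((e.insertNth u t : Fin (n + 1) → ι) (g w).1) (g w).2 := by
    intro t u
    refine iff_of_eq (congrArg _ (funext fun w => ?_))
    rcases w with v | _ <;> simp [g]
  rw [key, key]
  exact hind.realize_comp_iff χ g h h'

end Cut

-- Shifted by one so that its entries avoid `0`: they index the parameters, taken from `ℚ*`.
def stdTuple (n : ℕ) : Fin n → ℚ := fun k => (k : ℚ) + 1

theorem strictMono_stdTuple (n : ℕ) : StrictMono (stdTuple n) := fun i j h => by
  simpa [stdTuple] using h

theorem strictMono_insertNth_stdTuple {n : ℕ} (e : Fin (n + 1)) :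
    StrictMono (e.insertNth ((e : ℚ) + 1 / 2) (stdTuple n)) := by
  refine (Fin.strictMono_insertNth_iff _ _ _).2
    ⟨strictMono_stdTuple n, fun k hk => ?_, fun k hk => ?_⟩
  · have : (k : ℚ) + 1 ≤ e := by exact_mod_cast (Fin.lt_def.1 hk : (k : ℕ) < e)
    simp only [stdTuple]; linarith
  · have : (e : ℚ) ≤ k := by exact_mod_cast (Fin.le_def.1 hk : (e : ℕ) ≤ k)
    simp only [stdTuple]; linarith

theorem strictMono_update_stdTuple {n : ℕ} (d : Fin n) {r : ℚ} (hr : r ∈ Ioo (d : ℚ) (d + 2)) :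
    StrictMono (update (stdTuple n) d r) := by
  intro i j hij
  have hij' : (i : ℕ) < j := hij
  rcases eq_or_ne i d with rfl | hi
  · have : (i : ℚ) + 2 ≤ j + 1 := by exact_mod_cast Nat.add_le_add_right hij' 1
    simp [stdTuple, hij.ne']; linarith [hr.2]
  rcases eq_or_ne j d with rfl | hj
  · have : (i : ℚ) + 1 ≤ j := by exact_mod_cast hij'
    simp [stdTuple, hi]; linarith [hr.1]
  simpa [stdTuple, hi, hj] using hij

theorem strictMono_insertNth_succ_update_stdTuple {n : ℕ} (d : Fin n) {r u : ℚ}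
    (hr : r ∈ Ioo (d : ℚ) (d + 2)) (hu : u < d + 2) (hru : r < u) :
    StrictMono (d.succ.insertNth u (update (stdTuple n) d r)) := by
  refine (Fin.strictMono_insertNth_iff _ _ _).2
    ⟨strictMono_update_stdTuple d hr, fun k hk => ?_, fun k hk => ?_⟩
  · rw [Fin.castSucc_lt_succ_iff] at hk
    rcases hk.eq_or_lt with rfl | hk
    · simpa using hru
    · have : (k : ℚ) + 1 ≤ d := by exact_mod_cast (Fin.lt_def.1 hk : (k : ℕ) < d)
      simp [stdTuple, hk.ne]; linarith [hr.1]
  · rw [Fin.succ_le_castSucc_iff] at hk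
    have : (d : ℚ) + 1 ≤ k := by exact_mod_cast (Fin.lt_def.1 hk : (d : ℕ) < k)
    simp [stdTuple, hk.ne']; linarith

theorem strictMono_insertNth_castSucc_update_stdTuple {n : ℕ} (d : Fin n) {r u : ℚ}
    (hr : r ∈ Ioo (d : ℚ) (d + 2)) (hu : (d : ℚ) < u) (hur : u < r) :
    StrictMono (d.castSucc.insertNth u (update (stdTuple n) d r)) := by
  refine (Fin.strictMono_insertNth_iff _ _ _).2
    ⟨strictMono_update_stdTuple d hr, fun k hk => ?_, fun k hk => ?_⟩
  · rw [Fin.castSucc_lt_castSucc_iff] at hk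
    have : (k : ℚ) + 1 ≤ d := by exact_mod_cast (Fin.lt_def.1 hk : (k : ℕ) < d)
    simp [stdTuple, hk.ne]; linarith
  · rw [Fin.castSucc_le_castSucc_iff] at hk
    rcases hk.eq_or_lt with rfl | hk
    · simpa using hur
    · have : (d : ℚ) + 1 ≤ k := by exact_mod_cast (Fin.lt_def.1 hk : (d : ℕ) < k)
      simp [stdTuple, hk.ne']; linarith [hr.2]

variable {γ δ : Type*} {a : ℚ → γ → M} {b : ℚ → δ → M}

theorem exists_realizeAt_iff_stdTuple
    (hind : IsIndiscernible (L := L) fun i => Sum.elim (a i) (b i)) {n : ℕ}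
    (χ : L.Formula (Fin n × γ ⊕ Fin 1)) (y₀ : δ) {t : Fin n → ℚ} (ht : StrictMono t) {u : ℚ}
    (hu : u ∉ range t) :
    ∃ e : Fin (n + 1), RealizeAt χ a b y₀ t u ↔ RealizeAt χ a b y₀ (stdTuple n) ((e : ℚ) + 1 / 2) :=
  have ⟨e, he⟩ := Fin.exists_strictMono_insertNth ht hu
  ⟨e, realizeAt_iff_of_strictMono_insertNth hind χ y₀ he (strictMono_insertNth_stdTuple e)⟩

theorem realizeAt_update_stdTuple_iff_of_lt
    (hind : IsIndiscernible (L := L) fun i => Sum.elim (a i) (b i)) {n : ℕ}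
    (χ : L.Formula (Fin n × γ ⊕ Fin 1)) (y₀ : δ) (d : Fin n) {r u : ℚ}
    (hr : r ∈ Ioo (d : ℚ) (d + 2)) (hu : u ∈ Ioo (d : ℚ) (d + 2)) (hru : r < u) :
    RealizeAt χ a b y₀ (update (stdTuple n) d r) u ↔
      RealizeAt χ a b y₀ (stdTuple n) ((d.succ : ℚ) + 1 / 2) :=
  realizeAt_iff_of_strictMono_insertNth hind χ y₀
    (strictMono_insertNth_succ_update_stdTuple d hr hu.2 hru) (strictMono_insertNth_stdTuple _)

theorem realizeAt_update_stdTuple_iff_of_gt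
    (hind : IsIndiscernible (L := L) fun i => Sum.elim (a i) (b i)) {n : ℕ}
    (χ : L.Formula (Fin n × γ ⊕ Fin 1)) (y₀ : δ) (d : Fin n) {r u : ℚ}
    (hr : r ∈ Ioo (d : ℚ) (d + 2)) (hu : u ∈ Ioo (d : ℚ) (d + 2)) (hur : u < r) :
    RealizeAt χ a b y₀ (update (stdTuple n) d r) u ↔
      RealizeAt χ a b y₀ (stdTuple n) ((d.castSucc : ℚ) + 1 / 2) :=
  realizeAt_iff_of_strictMono_insertNth hind χ y₀
    (strictMono_insertNth_castSucc_update_stdTuple d hr hu.1 hur) (strictMono_insertNth_stdTuple _)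

theorem Nat.exists_lt_not_iff_succ {P : ℕ → Prop} {n i j : ℕ} (hi : i ≤ n) (hj : j ≤ n)
    (h : ¬(P i ↔ P j)) : ∃ d < n, ¬(P d ↔ P (d + 1)) := by
  by_contra! H
  have hconst : ∀ k ≤ n, (P k ↔ P 0) := by
    intro k
    induction k with
    | zero => exact fun _ => Iff.rfl
    | succ k ih => exact fun hk => (H k (by omega)).symm.trans (ih (by omega))
  exact h ((hconst i hi).trans (hconst j hj).symm)

theorem exists_seq_rel_iff_lt_of_flip {K : Type*} [Field K] [LinearOrder K]
    [IsStrictOrderedRing K] {R : K → K → Prop} {α β : K} (hαβ : α < β) {p q : Prop}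
    (hpq : ¬(p ↔ q)) (hlt : ∀ r ∈ Ioo α β, ∀ u ∈ Ioo α β, r < u → (R r u ↔ p))
    (hgt : ∀ r ∈ Ioo α β, ∀ u ∈ Ioo α β, u < r → (R r u ↔ q)) :
    ∃ x y : ℕ → K, ∀ i j, R (x i) (y j) ↔ i < j := by
  set w : ℕ → K := fun k => (β - α) / (k + 2)
  have hw : ∀ k, w k ∈ Ioo 0 (β - α) := fun k =>
    ⟨by simp only [w]; have := sub_pos.2 hαβ; positivity,
      div_lt_self (sub_pos.2 hαβ) (by linarith [k.cast_nonneg (α := K)])⟩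
  have hw_anti : StrictAnti w := fun i j h =>
    div_lt_div_of_pos_left (sub_pos.2 hαβ) (by positivity) (by simpa using h)
  have hRel : ∀ r ∈ Ioo α β, ∀ u ∈ Ioo α β, r ≠ u → (R r u ↔ (p ↔ r < u)) := by
    intro r hr u hu hne
    rcases hne.lt_or_gt with h | h
    · simp [hlt r hr u hu h, h]
    · rw [hgt r hr u hu h, iff_false_right h.not_gt]
      tauto
  have hmem : ∀ k, β - w k ∈ Ioo α β ∧ α + w k ∈ Ioo α β := fun k => by
    have := hw k
    refine ⟨⟨?_, ?_⟩, ⟨?_, ?_⟩⟩ <;> linarith [this.1, this.2]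
  -- The odd and even terms of a monotone sequence interleave: `g (2i+1) < g (2j) ↔ i < j`.
  by_cases hp : p
  · refine ⟨fun i => β - w (2 * i + 1), fun j => β - w (2 * j), fun i j => ?_⟩
    have hne : β - w (2 * i + 1) ≠ β - w (2 * j) :=
      (sub_right_injective.comp hw_anti.injective).ne (by omega)
    rw [hRel _ (hmem _).1 _ (hmem _).1 hne, sub_lt_sub_iff_left, hw_anti.lt_iff_gt]
    simp only [hp, true_iff]
    omega
  · refine ⟨fun i => α + w (2 * i + 1), fun j => α + w (2 * j), fun i j => ?_⟩
    have hne : α + w (2 * i + 1) ≠ α + w (2 * j) :=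
      ((add_right_injective α).comp hw_anti.injective).ne (by omega)
    rw [hRel _ (hmem _).2 _ (hmem _).2 hne, add_lt_add_iff_left, hw_anti.lt_iff_gt]
    simp only [hp, false_iff, not_lt]
    omega

/-- Turns `χ(x̄₀, …, x̄ₙ₋₁; y)` into `ψ(x̄_d; y)` with all blocks as parameters (the `d`-th
parameter block is unused). -/
def extractSlot {n : ℕ} {γ : Type*} (d : Fin n) : Fin n × γ ⊕ Fin 1 → (γ ⊕ Fin 1) ⊕ Fin n × γ
  | Sum.inl v => if v.1 = d then Sum.inl (Sum.inl v.2) else Sum.inr v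
  | Sum.inr j => Sum.inl (Sum.inr j)

theorem realize_relabel_extractSlot {ι γ δ : Type*} {a : ι → γ → M} {b : ι → δ → M} {n : ℕ}
    (χ : L.Formula (Fin n × γ ⊕ Fin 1)) (y₀ : δ) (d : Fin n) (t : Fin n → ι) (r u : ι) :
    (χ.relabel (extractSlot d)).Realize
        (Sum.elim (Sum.elim (a r) fun _ => b u y₀) fun v => a (t v.1) v.2) ↔
      RealizeAt χ a b y₀ (update t d r) u := by
  rw [Formula.realize_relabel]
  refine iff_of_eq (congrArg _ (funext fun w => ?_))
  rcases w with ⟨k, x⟩ | _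
  · by_cases hk : k = d
    · subst hk; simp [extractSlot]
    · simp [extractSlot, hk]
  · rfl

theorem hasOPWithParams_of_forall_realize_iff {α β γ : Type*} (ψ : L.Formula ((α ⊕ β) ⊕ γ))
    (c : γ → M) (x : ℕ → α → M) (y : ℕ → β → M)
    (h : ∀ i j, ψ.Realize (Sum.elim (Sum.elim (x i) (y j)) c) ↔ i < j) :
    HasOPWithParams ψ c :=
  ⟨⟨M, ElementaryEmbedding.refl L M⟩, x, y, h⟩

theorem HasOPWithParams.relabel_equiv {α β γ γ' : Type*} {ψ : L.Formula ((α ⊕ β) ⊕ γ)}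
    {c : γ → M} (h : HasOPWithParams ψ c) (e : γ ≃ γ') :
    HasOPWithParams (ψ.relabel (Sum.map id e)) (c ∘ e.symm) := by
  obtain ⟨N, x, y, hxy⟩ := h
  refine ⟨N, x, y, fun i j => ?_⟩
  rw [Formula.realize_relabel, Sum.elim_comp_map]
  simpa [comp_def] using hxy i j

end

theorem order_property_of_not_indiscernible_over_first_coordinate_general
    {L : FirstOrder.Language.{u, v}} (M : Type (max u v)) [L.Structure M] {mx ny : ℕ}
    (a : ℚ → Fin mx → M) (b : ℚ → Fin (ny + 1) → M)
    (hind : IsIndiscernible (L := L) (fun i : ℚ => Sum.elim (a i) (b i)))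
    (hnover : ¬ IsIndiscernibleOver (L := L) (fun i : {q : ℚ // q ≠ 0} => a i.1) {b 0 0}) :
    ∃ (k : ℕ) (ψ : L.Formula ((Fin mx ⊕ Fin 1) ⊕ Fin k)) (c : Fin k → M),
      (∀ l, c l ∈ ⋃ i : {q : ℚ // q ≠ 0}, Set.range (a i.1)) ∧
        HasOPWithParams ψ c := by
  obtain ⟨n, i, j, χ, hi, hj, hne⟩ :=
    exists_not_realize_iff_of_not_isIndiscernibleOver_singleton hnover
  have hcut (t : Fin n → {q : ℚ // q ≠ 0}) (ht : StrictMono t) :=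
    exists_realizeAt_iff_stdTuple hind χ 0 (t := fun k => (t k).1) ht fun ⟨k, hk⟩ => (t k).2 hk
  obtain ⟨e₁, he₁⟩ := hcut i hi
  obtain ⟨e₂, he₂⟩ := hcut j hj
  obtain ⟨d, hd, hflip⟩ := Nat.exists_lt_not_iff_succ (P := fun e : ℕ =>
      RealizeAt χ a b 0 (stdTuple n) ((e : ℚ) + 1 / 2)) e₁.is_le e₂.is_le
    fun h => hne (he₁.trans (h.trans he₂.symm))
  let c : Fin n × Fin mx → M := fun v => a (stdTuple n v.1) v.2
  refine ⟨n * mx, (χ.relabel (extractSlot ⟨d, hd⟩)).relabel (Sum.map id finProdFinEquiv),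
    c ∘ finProdFinEquiv.symm,
    fun l => mem_iUnion.2 ⟨⟨stdTuple n _, Nat.cast_add_one_ne_zero _⟩, _, rfl⟩, ?_⟩
  obtain ⟨x, y, hxy⟩ := exists_seq_rel_iff_lt_of_flip
    (R := fun r u => RealizeAt χ a b 0 (update (stdTuple n) ⟨d, hd⟩ r) u)
    (show (d : ℚ) < d + 2 by linarith) (Iff.comm.not.1 hflip)
    (fun r hr u hu hru => realizeAt_update_stdTuple_iff_of_lt hind χ 0 _ hr hu hru)
    (fun r hr u hu hur => realizeAt_update_stdTuple_iff_of_gt hind χ 0 _ hr hu hur)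
  exact (hasOPWithParams_of_forall_realize_iff _ c (fun i => a (x i)) (fun j _ => b (y j) 0)
    fun i j => (realize_relabel_extractSlot χ 0 ⟨d, hd⟩ _ _ _).trans (hxy i j)).relabel_equiv
      finProdFinEquiv

/-- Given an indiscernible sequence `(āᵢ, b̄ᵢ : i ∈ ℚ)` with `φ(āᵢ; b̄ⱼ)` iff
`i < j`, write `b̄₀ = b₀⁰ ⌢ b̄'₀` and `ℚ* = ℚ \ {0}`. If `(āᵢ : i ∈ ℚ*)` is NOT indiscernible
over `b₀⁰`, then some formula `ψ(x̄; y)`, with `y` a single variable and parameters from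
`{āᵢ : i ∈ ℚ*}`, has the order property. -/
theorem order_property_of_not_indiscernible_over_first_coordinate
    {L : FirstOrder.Language.{u, v}} (T : L.Theory) (hT : T.IsComplete)
    (M : Type (max u v)) [L.Structure M] [Nonempty M] (hM : M ⊨ T)
    {mx ny : ℕ} (φ : L.Formula (Fin mx ⊕ Fin (ny + 1)))
    (a : ℚ → Fin mx → M) (b : ℚ → Fin (ny + 1) → M)
    (hind : IsIndiscernible (L := L) (fun i : ℚ => Sum.elim (a i) (b i)))
    (hord : ∀ i j : ℚ, φ.Realize (Sum.elim (a i) (b j)) ↔ i < j)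
    (hnover : ¬ IsIndiscernibleOver (L := L) (fun i : {q : ℚ // q ≠ 0} => a i.1) {b 0 0}) :
    ∃ (k : ℕ) (ψ : L.Formula ((Fin mx ⊕ Fin 1) ⊕ Fin k)) (c : Fin k → M),
      (∀ l, c l ∈ ⋃ i : {q : ℚ // q ≠ 0}, Set.range (a i.1)) ∧
        HasOPWithParams ψ c :=
  order_property_of_not_indiscernible_over_first_coordinate_general M a b hind hnover
end

section
/- Let T be a complete first-order theory, φ(x̄;ȳ) a formula with |ȳ| ≥ 2, and let (āᵢ : i ∈ ℚ) and (b̄ⱼ : j ∈ ℚ) be tuples in a model M of T forming an L*-indiscernible family indexed by the random ordered bipartite graph G*, such that M ⊨ φ(āᵢ; b̄ⱼ) iff R*(i,j). Write b̄ᵢ = bᵢ⁰⌢b̄'ᵢ where bᵢ⁰ is a single element. If the sequences (āᵢ : i ∈ ℚ) and (bᵢ⁰ : i ∈ ℚ) are mutually indiscernible, then the formula ψ(x̄;ȳ') := φ(x̄; b₀⁰, ȳ') (with parameter b₀⁰ and |ȳ'| = |ȳ| − 1) has the independence property: for every X ⊆ ℚ there is a tuple b̄_X in an elementary extension of M with φ(āᵢ;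 b₀⁰, b̄_X) iff i ∈ X. -/
open FirstOrder FirstOrder.Language

universe u v

/-- The variable relabeling realizing `ψ(x̄; ȳ') := φ(x̄; b₀⁰ ⌢ ȳ')`: the first `y`-variable
becomes the (single) parameter variable, the remaining `y`-variables form `ȳ'`. -/
def splitVar (mx ny : ℕ) : (Fin mx ⊕ Fin (ny + 1)) → ((Fin mx ⊕ Fin ny) ⊕ Fin 1) :=
  Sum.elim (fun x => Sum.inl (Sum.inl x))
    (Fin.cases (Sum.inr 0) (fun y => Sum.inl (Sum.inr y)))

/-! Fix `X ⊆ ℚ`. For finite `F ⊆ ℚ`, genericity of `G*` gives a `V`-vertex `j` whose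
`R`-neighbourhood cuts out `X` on `F`, so the tail of `b̄ⱼ` realizes the pattern
`φ(āᵢ; bⱼ⁰, ȳ') ↔ i ∈ X` on `F`. Existence of such a `ȳ'` is a formula in `bⱼ⁰` over the `āᵢ`,
so indiscernibility of `(bᵢ⁰)` over the `āᵢ` transfers it to `b₀⁰`. An ultrapower of `M` indexed
by the finite subsets of `ℚ` then realizes all these finite patterns at once. -/

variable {L : FirstOrder.Language.{u, v}} {M : Type (max u v)} [L.Structure M]

theorem IsRandomOBG.exists_right_adj_iff_mem {α β : Type*} [LinearOrder α] [LinearOrder β]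
    {R : α → β → Prop} (hR : IsRandomOBG R) (F : Finset α) (X : Set α) :
    ∃ y, ∀ x ∈ F, R x y ↔ x ∈ X := by
  classical
  obtain ⟨y, ⟨hpos, hneg⟩, -⟩ :=
    (hR.2.2.2.2.2 _ _ (Finset.disjoint_filter_filter_not F F (· ∈ X))).2.2 hR.2.2.2.1.some
  refine ⟨y, fun x hx => ⟨fun hxy => ?_, fun hxX => hpos x (Finset.mem_filter.2 ⟨hx, hxX⟩)⟩⟩
  by_contra hxX
  exact hneg x (Finset.mem_filter.2 ⟨hx, hxX⟩) hxy

theorem IsIndiscernibleOver.realize_iff_of_finite {ι : Type*} [LinearOrder ι] {γ κ : Type*}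
    [Finite κ] {c : ι → γ → M} {A : Set M} (hc : IsIndiscernibleOver (L := L) c A)
    (θ : L.Formula (γ ⊕ κ)) {p : κ → M} (hp : ∀ k, p k ∈ A) (j j' : ι) :
    θ.Realize (Sum.elim (c j) p) ↔ θ.Realize (Sum.elim (c j') p) := by
  let e := Finite.equivFin κ
  have key := hc 1 _ (fun _ => j) (fun _ => j') (Subsingleton.strictMono _)
    (Subsingleton.strictMono _) (p ∘ e.symm) (fun l => hp _)
    (θ.relabel (Sum.map (fun z => ((0 : Fin 1), z)) e))
  have hval : ∀ j'', Sum.elim (fun v : Fin 1 × γ => c j'' v.2) (p ∘ e.symm) ∘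
      Sum.map (fun z => ((0 : Fin 1), z)) e = Sum.elim (c j'') p := by
    intro j''
    funext z
    rcases z with z | z <;> simp
  rwa [Formula.realize_relabel, Formula.realize_relabel, hval, hval] at key

section Pattern

variable {α β γ : Type*} [Finite β]

def signedFormula (θ : L.Formula α) (P : Prop) [Decidable P] : L.Formula α :=
  if P then θ else θ.not

theorem realize_signedFormula (θ : L.Formula α) (P : Prop) [Decidable P] (x : α → M) :
    (signedFormula θ P).Realize x ↔ (θ.Realize x ↔ P) := by
  unfold signedFormula
  split_ifs with hP <;> simp [hP]

noncomputable def patternFormula (ψ : L.Formula ((α ⊕ β) ⊕ γ)) (κ : Type*) [Finite κ]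
    (P : κ → Prop) [DecidablePred P] : L.Formula (γ ⊕ κ × α) :=
  Formula.iExs β <| Formula.iInf fun k => signedFormula
    (ψ.relabel (Sum.elim (Sum.elim (fun x => Sum.inl (Sum.inr (k, x))) Sum.inr)
      (Sum.inl ∘ Sum.inl))) (P k)

theorem realize_patternFormula (ψ : L.Formula ((α ⊕ β) ⊕ γ)) {κ : Type*} [Finite κ]
    (P : κ → Prop) [DecidablePred P] (c : γ → M) (p : κ × α → M) :
    (patternFormula ψ κ P).Realize (Sum.elim c p) ↔
      ∃ w : β → M, ∀ k, ψ.Realize (Sum.elim (Sum.elim (fun x => p (k, x)) w) c) ↔ P k := by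
  simp only [patternFormula, Formula.realize_iExs, Formula.realize_iInf, realize_signedFormula,
    Formula.realize_relabel]
  refine exists_congr fun w => forall_congr' fun k => Iff.of_eq ?_
  congr 2
  funext z
  rcases z with (x | y) | z <;> rfl

theorem IsIndiscernibleOver.exists_realize_iff_of_exists [Finite α] {ι ι' : Type*}
    [LinearOrder ι'] {a : ι → α → M} {d : ι' → γ → M}
    (hd : IsIndiscernibleOver (L := L) d (⋃ i, Set.range (a i)))
    (ψ : L.Formula ((α ⊕ β) ⊕ γ)) (F : Finset ι) (P : ι → Prop) {j j' : ι'}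
    (h : ∃ w : β → M, ∀ i ∈ F, ψ.Realize (Sum.elim (Sum.elim (a i) w) (d j)) ↔ P i) :
    ∃ w : β → M, ∀ i ∈ F, ψ.Realize (Sum.elim (Sum.elim (a i) w) (d j')) ↔ P i := by
  classical
  have hpattern : ∀ j'', (∃ w : β → M, ∀ i ∈ F,
      ψ.Realize (Sum.elim (Sum.elim (a i) w) (d j'')) ↔ P i) ↔
      (patternFormula ψ F (fun i => P i)).Realize
        (Sum.elim (d j'') fun k : F × α => a k.1 k.2) := by
    intro j''
    simp only [realize_patternFormula, Subtype.forall]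
  rw [hpattern] at h ⊢
  exact (hd.realize_iff_of_finite _ (fun k => Set.mem_iUnion.2 ⟨_, _, rfl⟩) j j').1 h

end Pattern

section Ultrapower

variable [Nonempty M]

noncomputable def ultrapowerDiagonal {α : Type*} (u : Ultrafilter α) :
    M ↪ₑ[L] (u : Filter α).Product fun _ => M where
  toFun x := ((fun _ => x : α → M) : (u : Filter α).Product fun _ => M)
  map_formula' _ φ x :=
    (Ultraproduct.realize_formula_cast φ fun i _ => x i).trans Filter.eventually_const

variable (L M) in
noncomputable def finsetUltrapower (ι : Type) : ElemExt L M :=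
  ⟨_, ultrapowerDiagonal (Ultrafilter.of (Filter.atTop : Filter (Finset ι)))⟩

theorem exists_realize_iff_in_finsetUltrapower {ι : Type} {α β γ : Type*}
    (ψ : L.Formula ((α ⊕ β) ⊕ γ)) (a : ι → α → M) (c : γ → M) (P : ι → Prop)
    (h : ∀ F : Finset ι, ∃ w : β → M, ∀ i ∈ F,
      ψ.Realize (Sum.elim (Sum.elim (a i) w) c) ↔ P i) :
    ∃ w : β → (finsetUltrapower L M ι).carrier, ∀ i,
      ψ.Realize (Sum.elim (Sum.elim ((finsetUltrapower L M ι).emb ∘ a i) w)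
        ((finsetUltrapower L M ι).emb ∘ c)) ↔ P i := by
  choose w hw using h
  let u := Ultrafilter.of (Filter.atTop : Filter (Finset ι))
  refine ⟨fun y => ((fun F => w F y : Finset ι → M) : (u : Filter (Finset ι)).Product _),
    fun i => ?_⟩
  have hi : ∀ᶠ F in (u : Filter (Finset ι)), i ∈ F :=
    Ultrafilter.of_le _ <| (Filter.eventually_ge_atTop {i}).mono fun F hF =>
      Finset.singleton_subset_iff.1 hF
  calc _ ↔ ∀ᶠ F in (u : Filter (Finset ι)), ψ.Realize (Sum.elim (Sum.elim (a i) (w F)) c) := by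
        refine (Iff.of_eq ?_).trans <| Ultraproduct.realize_formula_cast ψ
          fun z F => Sum.elim (Sum.elim (a i) (w F)) c z
        congr 1
        funext z
        rcases z with (x | y) | z <;> rfl
    _ ↔ ∀ᶠ _ in (u : Filter (Finset ι)), P i :=
        Filter.eventually_congr <| hi.mono fun F hF => hw F i hF
    _ ↔ P i := Filter.eventually_const

end Ultrapower

theorem hasIPWithParams_of_injective {ι α β γ : Type*} {ψ : L.Formula ((α ⊕ β) ⊕ γ)}
    {c : γ → M} (N : ElemExt L M) (a : ι → α → N.carrier) {e : ℕ → ι}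
    (he : Function.Injective e)
    (h : ∀ X : Set ι, ∃ w : β → N.carrier, ∀ i,
      ψ.Realize (Sum.elim (Sum.elim (a i) w) (N.emb ∘ c)) ↔ i ∈ X) :
    HasIPWithParams ψ c := by
  choose w hw using h
  exact ⟨N, a ∘ e, fun S => w (e '' S), fun i S => (hw _ _).trans he.mem_set_image⟩

theorem realize_relabel_splitVar {N : Type*} [L.Structure N] {mx ny : ℕ}
    (φ : L.Formula (Fin mx ⊕ Fin (ny + 1))) (x : Fin mx → N) (y : Fin ny → N) (z : N) :
    (φ.relabel (splitVar mx ny)).Realize (Sum.elim (Sum.elim x y) fun _ => z) ↔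
      φ.Realize (Sum.elim x (Fin.cons z y)) := by
  rw [Formula.realize_relabel]
  refine Iff.of_eq (congrArg _ (funext fun v => ?_))
  rcases v with v | v
  · rfl
  · cases v using Fin.cases <;> rfl

theorem independence_property_of_mutually_indiscernible_first_coordinate_general
    {L : FirstOrder.Language.{u, v}}
    (M : Type (max u v)) [L.Structure M] [Nonempty M]
    {mx ny : ℕ} (φ : L.Formula (Fin mx ⊕ Fin (ny + 1)))
    (a : ℚ → Fin mx → M) (b : ℚ → Fin (ny + 1) → M)
    (R : ℚ → ℚ → Prop) (hR : IsRandomOBG R)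
    (hedge : ∀ i j : ℚ, φ.Realize (Sum.elim (a i) (b j)) ↔ R i j)
    (hmut : MutuallyIndiscernible (L := L) a (fun i (_ : Fin 1) => b i 0)) :
    HasIPWithParams (φ.relabel (splitVar mx ny)) (fun _ : Fin 1 => b 0 0) ∧
      ∃ N : ElemExt L M, ∀ X : Set ℚ, ∃ bX : Fin ny → N.carrier,
        ∀ i : ℚ,
          (φ.Realize (Sum.elim (fun x => N.emb (a i x)) (Fin.cases (N.emb (b 0 0)) bX)) ↔
            i ∈ X) := by
  set ψ := φ.relabel (splitVar mx ny)
  have hfinite : ∀ (X : Set ℚ) (F : Finset ℚ), ∃ w : Fin ny → M, ∀ i ∈ F,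
      ψ.Realize (Sum.elim (Sum.elim (a i) w) fun _ => b 0 0) ↔ i ∈ X := by
    intro X F
    obtain ⟨j, hj⟩ := hR.exists_right_adj_iff_mem F X
    refine hmut.2.exists_realize_iff_of_exists (j := j) ψ F (· ∈ X)
      ⟨Fin.tail (b j), fun i hi => ?_⟩
    rw [realize_relabel_splitVar, Fin.cons_self_tail, hedge]
    exact hj i hi
  have hN := fun X => exists_realize_iff_in_finsetUltrapower ψ a _ (· ∈ X) (hfinite X)
  refine ⟨hasIPWithParams_of_injective _ _ Nat.cast_injective hN, finsetUltrapower L M ℚ,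
    fun X => ?_⟩
  obtain ⟨w, hw⟩ := hN X
  exact ⟨w, fun i => (realize_relabel_splitVar φ _ w _).symm.trans (hw i)⟩

/-- Let `(āᵢ, b̄ᵢ : i ∈ ℚ)` be `L*`-indiscernible, indexed by the random ordered
bipartite graph `G*` (edge relation `R`), with `φ(āᵢ; b̄ⱼ)` iff `R i j`, and write
`b̄ᵢ = bᵢ⁰ ⌢ b̄'ᵢ`. If `(āᵢ)` and `(bᵢ⁰)` are mutually indiscernible, then
`ψ(x̄; ȳ') := φ(x̄; b₀⁰, ȳ')` has the independence property: for every `X ⊆ ℚ` there is a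
tuple `b̄_X` in an elementary extension of `M` with `φ(āᵢ; b₀⁰, b̄_X)` iff `i ∈ X`. -/
theorem independence_property_of_mutually_indiscernible_first_coordinate
    {L : FirstOrder.Language.{u, v}} (T : L.Theory) (hT : T.IsComplete)
    (M : Type (max u v)) [L.Structure M] [Nonempty M] (hM : M ⊨ T)
    {mx ny : ℕ} (φ : L.Formula (Fin mx ⊕ Fin (ny + 1)))
    (a : ℚ → Fin mx → M) (b : ℚ → Fin (ny + 1) → M)
    (R : ℚ → ℚ → Prop) (hR : IsRandomOBG R)
    (hind : IsLStarIndiscernible (L := L) R a b)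
    (hedge : ∀ i j : ℚ, φ.Realize (Sum.elim (a i) (b j)) ↔ R i j)
    (hmut : MutuallyIndiscernible (L := L) a (fun i (_ : Fin 1) => b i 0)) :
    HasIPWithParams (φ.relabel (splitVar mx ny)) (fun _ : Fin 1 => b 0 0) ∧
      ∃ N : ElemExt L M, ∀ X : Set ℚ, ∃ bX : Fin ny → N.carrier,
        ∀ i : ℚ,
          (φ.Realize (Sum.elim (fun x => N.emb (a i x)) (Fin.cases (N.emb (b 0 0)) bX)) ↔
            i ∈ X) :=
  independence_property_of_mutually_indiscernible_first_coordinate_general M φ a b R hR hedge hmut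
end
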